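/- arXiv:2402.03181 — 2 statements merged into one kernel-verified Lean document; each statement's English description precedes it below -/
import Mathlib

section
/- For ρ ∈ [0, ρ₀) where ρ₀ is the smallest positive root of 1−16ρ²+8ρ⁴ = 0, the decay factor m(ρ) = ((√(−6ρ⁴+12ρ²+1) − 4ρ(1−ρ²)√(2−ρ²))/(1−16ρ²+8ρ⁴))⁻² is at least 1 and is monotonically nondecreasing in ρ. -/
noncomputable def decayFactor (ρ : ℝ) : ℝ :=
  (((Real.sqrt (-6 * ρ ^ 4 + 12 * ρ ^ 2 + 1) - 4 * ρ * (1 - ρ ^ 2) * Real.sqrt (2 - ρ ^ 2)) /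
      (1 - 16 * ρ ^ 2 + 8 * ρ ^ 4)) ^ 2)⁻¹

/-- The "nice" form of the decay factor. -/
noncomputable def gFun (ρ : ℝ) : ℝ :=
  (Real.sqrt (-6 * ρ ^ 4 + 12 * ρ ^ 2 + 1) + 4 * ρ * (1 - ρ ^ 2) * Real.sqrt (2 - ρ ^ 2)) /
    (1 - 4 * ρ ^ 2 + 2 * ρ ^ 4)

lemma sqrtA_ge_one {ρ : ℝ} (h : ρ ^ 2 ≤ 2) :
    1 ≤ Real.sqrt (-6 * ρ ^ 4 + 12 * ρ ^ 2 + 1) := by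
  rw [Real.le_sqrt' one_pos]
  nlinarith [sq_nonneg ρ]

lemma gFun_ge_one {ρ : ℝ} (h0 : 0 ≤ ρ) (h13 : ρ ^ 2 < 1 / 13) : 1 ≤ gFun ρ := by
  have hC : 0 < 1 - 4 * ρ ^ 2 + 2 * ρ ^ 4 := by nlinarith [sq_nonneg ρ, sq_nonneg (ρ^2)]
  have hC1 : 1 - 4 * ρ ^ 2 + 2 * ρ ^ 4 ≤ 1 := by nlinarith [sq_nonneg ρ]
  have hA : 1 ≤ Real.sqrt (-6 * ρ ^ 4 + 12 * ρ ^ 2 + 1) := sqrtA_ge_one (by nlinarith)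
  have hB : 0 ≤ 4 * ρ * (1 - ρ ^ 2) * Real.sqrt (2 - ρ ^ 2) := by
    apply mul_nonneg
    · nlinarith
    · exact Real.sqrt_nonneg _
  rw [gFun, le_div_iff₀ hC]
  nlinarith

lemma decayFactor_eq_gFun_sq {ρ : ℝ} (h0 : 0 ≤ ρ) (h13 : ρ ^ 2 < 1 / 13)
    (hD : 0 < 1 - 16 * ρ ^ 2 + 8 * ρ ^ 4) : decayFactor ρ = gFun ρ ^ 2 := by
  set sA := Real.sqrt (-6 * ρ ^ 4 + 12 * ρ ^ 2 + 1) with hsA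
  set s2 := Real.sqrt (2 - ρ ^ 2) with hs2
  have hA2 : sA ^ 2 = -6 * ρ ^ 4 + 12 * ρ ^ 2 + 1 :=
    Real.sq_sqrt (by nlinarith [sq_nonneg ρ, sq_nonneg (ρ^2)])
  have hs22 : s2 ^ 2 = 2 - ρ ^ 2 := Real.sq_sqrt (by nlinarith)
  set B := 4 * ρ * (1 - ρ ^ 2) * s2 with hB
  have hBnn : 0 ≤ B := by
    apply mul_nonneg
    · nlinarith
    · exact Real.sqrt_nonneg _
  have hA1 : 1 ≤ sA := sqrtA_ge_one (by nlinarith)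
  have hC : 0 < 1 - 4 * ρ ^ 2 + 2 * ρ ^ 4 := by nlinarith [sq_nonneg ρ, sq_nonneg (ρ^2)]
  have key : (sA - B) * (sA + B) =
      (1 - 16 * ρ ^ 2 + 8 * ρ ^ 4) * (1 - 4 * ρ ^ 2 + 2 * ρ ^ 4) := by
    have h : (sA - B) * (sA + B) = sA ^ 2 - (4 * ρ * (1 - ρ ^ 2)) ^ 2 * s2 ^ 2 := by
      rw [hB]; ring
    rw [h, hA2, hs22]; ring
  have hsum : 0 < sA + B := by linarith
  have hdiff : 0 < sA - B := by
    have h1 : 0 < (1 - 16 * ρ ^ 2 + 8 * ρ ^ 4) * (1 - 4 * ρ ^ 2 + 2 * ρ ^ 4) :=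
      mul_pos hD hC
    nlinarith [key]
  rw [decayFactor, gFun, ← hsA, ← hs2, ← hB]
  rw [← inv_pow, inv_div]
  congr 1
  rw [div_eq_div_iff hdiff.ne' hC.ne']
  linarith [key]

lemma gFun_mono {ρ σ : ℝ} (h0 : 0 ≤ ρ) (hle : ρ ≤ σ) (h13 : σ ^ 2 < 1 / 13) :
    gFun ρ ≤ gFun σ := by
  have hσ0 : 0 ≤ σ := le_trans h0 hle
  have hρ13 : ρ ^ 2 < 1 / 13 := by nlinarith
  have hsqle : ρ ^ 2 ≤ σ ^ 2 := by nlinarith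
  have hAle : (-6 * ρ ^ 4 + 12 * ρ ^ 2 + 1) ≤ (-6 * σ ^ 4 + 12 * σ ^ 2 + 1) := by
    nlinarith [mul_nonneg (sub_nonneg.2 hsqle) (show (0:ℝ) ≤ 2 - σ ^ 2 - ρ ^ 2 by nlinarith)]
  have hsA : Real.sqrt (-6 * ρ ^ 4 + 12 * ρ ^ 2 + 1) ≤
      Real.sqrt (-6 * σ ^ 4 + 12 * σ ^ 2 + 1) := Real.sqrt_le_sqrt hAle
  have hs2ρ : Real.sqrt (2 - ρ ^ 2) ^ 2 = 2 - ρ ^ 2 := Real.sq_sqrt (by nlinarith)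
  have hs2σ : Real.sqrt (2 - σ ^ 2) ^ 2 = 2 - σ ^ 2 := Real.sq_sqrt (by nlinarith)
  have hBρ : 0 ≤ 4 * ρ * (1 - ρ ^ 2) * Real.sqrt (2 - ρ ^ 2) :=
    mul_nonneg (by nlinarith) (Real.sqrt_nonneg _)
  have hBσ : 0 ≤ 4 * σ * (1 - σ ^ 2) * Real.sqrt (2 - σ ^ 2) :=
    mul_nonneg (by nlinarith) (Real.sqrt_nonneg _)
  have hBle : 4 * ρ * (1 - ρ ^ 2) * Real.sqrt (2 - ρ ^ 2) ≤
      4 * σ * (1 - σ ^ 2) * Real.sqrt (2 - σ ^ 2) := by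
    apply le_of_pow_le_pow_left₀ two_ne_zero hBσ
    have e1 : (4 * ρ * (1 - ρ ^ 2) * Real.sqrt (2 - ρ ^ 2)) ^ 2 =
        16 * ρ ^ 2 * (1 - ρ ^ 2) ^ 2 * (2 - ρ ^ 2) := by
      rw [mul_pow, hs2ρ]; ring
    have e2 : (4 * σ * (1 - σ ^ 2) * Real.sqrt (2 - σ ^ 2)) ^ 2 =
        16 * σ ^ 2 * (1 - σ ^ 2) ^ 2 * (2 - σ ^ 2) := by
      rw [mul_pow, hs2σ]; ring
    rw [e1, e2]
    have hQ : 0 ≤ 2 - 5 * (σ ^ 2 + ρ ^ 2) + (σ ^ 4 + ρ ^ 4) * (4 - σ ^ 2 - ρ ^ 2)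
        + 4 * (σ ^ 2 * ρ ^ 2) := by
      have h1 : 0 ≤ (σ ^ 4 + ρ ^ 4) * (4 - σ ^ 2 - ρ ^ 2) := by
        apply mul_nonneg
        · positivity
        · nlinarith
      have h2 : 0 ≤ σ ^ 2 * ρ ^ 2 := by positivity
      linarith
    nlinarith [mul_nonneg (sub_nonneg.2 hsqle) hQ]
  have hCσ : 0 < 1 - 4 * σ ^ 2 + 2 * σ ^ 4 := by nlinarith [sq_nonneg σ, sq_nonneg (σ^2)]
  have hCle : 1 - 4 * σ ^ 2 + 2 * σ ^ 4 ≤ 1 - 4 * ρ ^ 2 + 2 * ρ ^ 4 := by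
    nlinarith [mul_nonneg (sub_nonneg.2 hsqle) (show (0:ℝ) ≤ 2 - σ ^ 2 - ρ ^ 2 by nlinarith)]
  exact div_le_div₀ (add_nonneg (Real.sqrt_nonneg _) hBσ) (add_le_add hsA hBle) hCσ hCle

/-- On `[0, ρ₀)`, where `ρ₀` is the smallest positive root of `1 − 16ρ² + 8ρ⁴`,
the decay factor `m(ρ)` is at least 1 and is monotonically nondecreasing. -/
theorem decayFactor_ge_one_and_monotone (ρ₀ : ℝ) (hρ₀ : 0 < ρ₀)
    (hroot : 1 - 16 * ρ₀ ^ 2 + 8 * ρ₀ ^ 4 = 0)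
    (hmin : ∀ x : ℝ, 0 < x → 1 - 16 * x ^ 2 + 8 * x ^ 4 = 0 → ρ₀ ≤ x) :
    (∀ ρ ∈ Set.Ico 0 ρ₀, 1 ≤ decayFactor ρ) ∧
    MonotoneOn decayFactor (Set.Ico 0 ρ₀) := by
  -- bound ρ₀² < 1/13 using the explicit small root √(1 - √14/4)
  have h14u : Real.sqrt 14 < 3.75 := by
    rw [show (3.75 : ℝ) = Real.sqrt (3.75 ^ 2) from (Real.sqrt_sq (by norm_num)).symm]
    exact Real.sqrt_lt_sqrt (by norm_num) (by norm_num)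
  have h14l : (3.7 : ℝ) ≤ Real.sqrt 14 := by
    rw [show (3.7 : ℝ) ≤ Real.sqrt 14 ↔ (3.7:ℝ) ^ 2 ≤ 14 from Real.le_sqrt' (by norm_num)]
    norm_num
  have hargpos : 0 < 1 - Real.sqrt 14 / 4 := by linarith
  set x := Real.sqrt (1 - Real.sqrt 14 / 4) with hx
  have hxsq : x ^ 2 = 1 - Real.sqrt 14 / 4 := Real.sq_sqrt hargpos.le
  have hxpos : 0 < x := Real.sqrt_pos.2 hargpos
  have h14sq : Real.sqrt 14 ^ 2 = 14 := Real.sq_sqrt (by norm_num)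
  have hxroot : 1 - 16 * x ^ 2 + 8 * x ^ 4 = 0 := by
    have h4 : x ^ 4 = (x ^ 2) ^ 2 := by ring
    rw [h4, hxsq]; nlinarith [h14sq]
  have hρ₀x : ρ₀ ≤ x := hmin x hxpos hxroot
  have hbound : ρ₀ ^ 2 < 1 / 13 := by nlinarith [hxsq, hρ₀.le]
  have h13 : ∀ ρ ∈ Set.Ico (0:ℝ) ρ₀, ρ ^ 2 < 1 / 13 := by
    intro ρ ⟨h0, hlt⟩
    nlinarith
  have hD : ∀ ρ ∈ Set.Ico (0:ℝ) ρ₀, 0 < 1 - 16 * ρ ^ 2 + 8 * ρ ^ 4 := by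
    intro ρ ⟨h0, hlt⟩
    have hsq : ρ ^ 2 < ρ₀ ^ 2 := by nlinarith
    nlinarith [hroot, mul_pos (sub_pos.2 hsq)
      (show (0:ℝ) < 2 - ρ₀ ^ 2 - ρ ^ 2 by nlinarith)]
  constructor
  · intro ρ hρ
    rw [decayFactor_eq_gFun_sq hρ.1 (h13 ρ hρ) (hD ρ hρ)]
    have := gFun_ge_one hρ.1 (h13 ρ hρ)
    nlinarith
  · intro ρ hρ σ hσ hle
    rw [decayFactor_eq_gFun_sq hρ.1 (h13 ρ hρ) (hD ρ hρ),
      decayFactor_eq_gFun_sq hσ.1 (h13 σ hσ) (hD σ hσ)]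
    have h1 := gFun_ge_one hρ.1 (h13 ρ hρ)
    have h2 := gFun_mono hρ.1 hle (h13 σ hσ)
    nlinarith
end

section
/- Suppose X₁,…,Xₙ (n ≥ 2) are i.i.d. random variables in [0,1] with variance σ². Then with probability at least 1−δ, √σ² ≤ √V̂ + √(2 ln(1/δ)/(n−1)), where V̂ is the unbiased sample variance. -/
set_option linter.unusedSectionVars false
set_option linter.unusedVariables false
set_option maxHeartbeats 1000000


namespace MPaux

variable (n : ℕ)

/-- The modulus used for the round-robin classifier. -/
def N : ℕ := if n % 2 = 0 then n - 1 else n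

/-- Classifier of pairs into matchings. -/
def cls (p : Fin n × Fin n) : ZMod (N n) :=
  if p.2.val = n - 1 ∧ n % 2 = 0 then 2 * (p.1.val : ZMod (N n))
  else (p.1.val : ZMod (N n)) + (p.2.val : ZMod (N n))

variable {n}

lemma N_le (hn : 2 ≤ n) : N n ≤ n := by unfold N; split <;> omega

lemma N_pos (hn : 2 ≤ n) : 1 ≤ N n := by unfold N; split <;> omega

lemma N_odd (hn : 2 ≤ n) : Odd (N n) := by
  unfold N; split <;> rename_i h
  · exact Nat.Even.sub_odd (by omega) (Nat.even_iff.2 h) odd_one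
  · exact Nat.odd_iff.2 (by omega)

lemma injZ (hn : 2 ≤ n) {a b : ℕ} (ha : a < N n) (hb : b < N n)
    (h : (a : ZMod (N n)) = (b : ZMod (N n))) : a = b := by
  rw [← ZMod.val_cast_of_lt ha, ← ZMod.val_cast_of_lt hb, h]

lemma two_unit (hn : 2 ≤ n) : IsUnit (2 : ZMod (N n)) := by
  have : ((2 : ℕ) : ZMod (N n)) = (2 : ZMod (N n)) := by push_cast; ring
  rw [← this, ZMod.isUnit_iff_coprime]
  exact Nat.coprime_two_left.2 (N_odd hn)

lemma cancel2 (hn : 2 ≤ n) {a b : ZMod (N n)}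
    (h : 2 * a = 2 * b) : a = b := (two_unit hn).mul_left_cancel h

lemma val1_lt (hn : 2 ≤ n) {p : Fin n × Fin n} (hp : p.1 < p.2) : p.1.val < N n := by
  have h1 : p.1.val < p.2.val := hp
  have h2 : p.2.val < n := p.2.isLt
  unfold N; split <;> omega

lemma val2_lt (hn : 2 ≤ n) {p : Fin n × Fin n} (hp : p.1 < p.2)
    (hbr : ¬(p.2.val = n - 1 ∧ n % 2 = 0)) : p.2.val < N n := by
  have h2 : p.2.val < n := p.2.isLt
  unfold N; split <;> rename_i h
  · simp only [h, and_true] at hbr; omega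
  · omega

/-- Distinct pairs in the same fiber share no coordinate. -/
lemma fiber_matching (hn : 2 ≤ n) {p q : Fin n × Fin n}
    (hp : p.1 < p.2) (hq : q.1 < q.2) (hk : cls n p = cls n q) (hne : p ≠ q) :
    p.1 ≠ q.1 ∧ p.1 ≠ q.2 ∧ p.2 ≠ q.1 ∧ p.2 ≠ q.2 := by
  haveI : NeZero (N n) := ⟨by have := N_pos hn; omega⟩
  unfold cls at hk
  have hp1 := val1_lt hn hp
  have hq1 := val1_lt hn hq
  have hp12 : p.1.val < p.2.val := hp
  have hq12 : q.1.val < q.2.val := hq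
  have hext : p.1.val = q.1.val → p.2.val = q.2.val → False := fun h1 h2 =>
    hne (Prod.ext (Fin.ext h1) (Fin.ext h2))
  by_cases hbp : p.2.val = n - 1 ∧ n % 2 = 0 <;> by_cases hbq : q.2.val = n - 1 ∧ n % 2 = 0
  · -- both at infinity
    rw [if_pos hbp, if_pos hbq] at hk
    have h1 : p.1.val = q.1.val := injZ hn hp1 hq1 (cancel2 hn hk)
    exact (hext h1 (hbp.1.trans hbq.1.symm)).elim
  · -- p at infinity, q not
    rw [if_pos hbp, if_neg hbq] at hk
    have hq2 := val2_lt hn hq hbq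
    have hNeq : N n = n - 1 := by unfold N; simp [hbp.2]
    refine ⟨fun h => ?_, fun h => ?_, fun h => ?_, fun h => ?_⟩
    · have ha : p.1.val = q.1.val := congrArg Fin.val h
      have : (p.1.val : ZMod (N n)) = (q.2.val : ZMod (N n)) := by
        rw [ha] at hk ⊢; rw [two_mul] at hk; exact add_left_cancel hk
      have := injZ hn hp1 hq2 this
      omega
    · have ha : p.1.val = q.2.val := congrArg Fin.val h
      have : (q.2.val : ZMod (N n)) = (q.1.val : ZMod (N n)) := by
        rw [ha, two_mul] at hk; exact add_right_cancel hk
      have := injZ hn hq2 hq1 this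
      omega
    · have := congrArg Fin.val h; omega
    · have := congrArg Fin.val h; omega
  · -- q at infinity, p not
    rw [if_neg hbp, if_pos hbq] at hk
    have hp2 := val2_lt hn hp hbp
    have hNeq : N n = n - 1 := by unfold N; simp [hbq.2]
    refine ⟨fun h => ?_, fun h => ?_, fun h => ?_, fun h => ?_⟩
    · have ha : p.1.val = q.1.val := congrArg Fin.val h
      have : (p.2.val : ZMod (N n)) = (p.1.val : ZMod (N n)) := by
        rw [← ha, two_mul] at hk; exact add_left_cancel hk
      have := injZ hn hp2 hp1 this
      omega
    · have := congrArg Fin.val h; omega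
    · have ha : p.2.val = q.1.val := congrArg Fin.val h
      have : (p.1.val : ZMod (N n)) = (p.2.val : ZMod (N n)) := by
        rw [← ha, two_mul, add_comm ((p.1.val : ZMod (N n)))] at hk
        exact add_left_cancel hk
      have := injZ hn hp1 hp2 this
      omega
    · have := congrArg Fin.val h; omega
  · -- neither at infinity
    rw [if_neg hbp, if_neg hbq] at hk
    have hp2 := val2_lt hn hp hbp
    have hq2 := val2_lt hn hq hbq
    refine ⟨fun h => ?_, fun h => ?_, fun h => ?_, fun h => ?_⟩
    · have ha : p.1.val = q.1.val := congrArg Fin.val h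
      have : (p.2.val : ZMod (N n)) = (q.2.val : ZMod (N n)) := by
        rw [ha] at hk; exact add_left_cancel hk
      exact hext ha (injZ hn hp2 hq2 this)
    · have ha : p.1.val = q.2.val := congrArg Fin.val h
      have : (p.2.val : ZMod (N n)) = (q.1.val : ZMod (N n)) := by
        rw [ha, add_comm] at hk; exact add_right_cancel hk
      have := injZ hn hp2 hq1 this
      omega
    · have ha : p.2.val = q.1.val := congrArg Fin.val h
      have : (p.1.val : ZMod (N n)) = (q.2.val : ZMod (N n)) := by
        rw [← ha, add_comm ((p.2.val : ZMod (N n)))] at hk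
        exact add_right_cancel hk
      have := injZ hn hp1 hq2 this
      omega
    · have hb : p.2.val = q.2.val := congrArg Fin.val h
      have : (p.1.val : ZMod (N n)) = (q.1.val : ZMod (N n)) := by
        rw [hb] at hk; exact add_right_cancel hk
      exact hext (injZ hn hp1 hq1 this) hb



open Finset

/-- Every fiber of the classifier, within the set of increasing pairs,
has at least `(n-1)/2` elements. -/
lemma fiber_card (hn : 2 ≤ n) (k : ZMod (N n)) :
    n - 1 ≤ 2 * ((Finset.univ.filter (fun p : Fin n × Fin n => p.1 < p.2)).filter
      (fun p => cls n p = k)).card := by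
  haveI : NeZero (N n) := ⟨by have := N_pos hn; omega⟩
  set F := ((Finset.univ.filter (fun p : Fin n × Fin n => p.1 < p.2)).filter
      (fun p => cls n p = k)) with hF
  have hFmem : ∀ p ∈ F, p.1 < p.2 ∧ cls n p = k := by
    intro p hp
    simp only [hF, Finset.mem_filter, Finset.mem_univ, true_and] at hp
    exact hp
  set D := F.biUnion (fun p => ({p.1, p.2} : Finset (Fin n))) with hD
  have hcard : D.card = 2 * F.card := by
    rw [hD, Finset.card_biUnion]
    · rw [Finset.sum_congr rfl (fun p hp => Finset.card_pair
        (ne_of_lt (hFmem p hp).1)), Finset.sum_const, smul_eq_mul, mul_comm]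
    · intro p hp q hq hpq
      obtain ⟨h1, h2, h3, h4⟩ := fiber_matching hn (hFmem p hp).1 (hFmem q hq).1
        ((hFmem p hp).2.trans (hFmem q hq).2.symm) hpq
      simp only [Finset.disjoint_left, Finset.mem_insert, Finset.mem_singleton]
      rintro a (rfl | rfl) (h | h) <;> exact absurd h (by assumption)
  -- every index with `2*i ≠ k` and `i < N` is matched
  have matched : ∀ i : Fin n, i.val < N n → ¬(2 * (i.val : ZMod (N n)) = k) → i ∈ D := by
    intro i hiN h2i
    set j : ℕ := (k - (i.val : ZMod (N n))).val with hj
    have hjcast : (j : ZMod (N n)) = k - (i.val : ZMod (N n)) :=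
      ZMod.natCast_rightInverse _
    have hjlt : j < N n := ZMod.val_lt _
    have hji : j ≠ i.val := by
      intro h
      apply h2i
      rw [h] at hjcast
      linear_combination hjcast
    set jf : Fin n := ⟨j, lt_of_lt_of_le hjlt (N_le hn)⟩ with hjf
    have hjfv : jf.val = j := rfl
    set pr : Fin n × Fin n := if i.val < j then (i, jf) else (jf, i) with hpr
    have hlt : pr.1 < pr.2 := by
      rw [hpr]; split <;> rename_i hc <;> rw [Fin.lt_def] <;> simp [hjfv] <;> omega
    have hv2 : pr.2.val < N n := by
      rw [hpr]; split <;> simpa using by omega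
    have hnobr : ¬(pr.2.val = n - 1 ∧ n % 2 = 0) := by
      rintro ⟨hb1, hb2⟩
      have : N n = n - 1 := by unfold N; simp [hb2]
      omega
    have hsum : (pr.1.val : ZMod (N n)) + (pr.2.val : ZMod (N n)) = k := by
      have : (pr.1.val : ZMod (N n)) + pr.2.val
          = (i.val : ZMod (N n)) + j := by
        rw [hpr]; split <;> simp [hjfv] <;> ring
      rw [this, hjcast]; ring
    have hprF : pr ∈ F := by
      simp only [hF, Finset.mem_filter, Finset.mem_univ, true_and]
      refine ⟨hlt, ?_⟩
      unfold cls
      rw [if_neg hnobr]; exact hsum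
    apply Finset.mem_biUnion.2 ⟨pr, hprF, ?_⟩
    simp only [Finset.mem_insert, Finset.mem_singleton]
    rw [hpr]; split <;> simp
  -- the vertex at infinity is always matched (even case)
  have infty_matched : n % 2 = 0 → ∀ i : Fin n, i.val = n - 1 → i ∈ D := by
    intro heven i hi
    have hNeq : N n = n - 1 := by unfold N; simp [heven]
    set i0 : ℕ := ((2 : ZMod (N n))⁻¹ * k).val with hi0
    have hi0cast : (i0 : ZMod (N n)) = (2 : ZMod (N n))⁻¹ * k :=
      ZMod.natCast_rightInverse _
    have h2i0 : 2 * (i0 : ZMod (N n)) = k := by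
      rw [hi0cast, ← mul_assoc, ZMod.mul_inv_of_unit _ (two_unit hn), one_mul]
    have hi0lt : i0 < N n := ZMod.val_lt _
    set pr : Fin n × Fin n := (⟨i0, lt_of_lt_of_le hi0lt (N_le hn)⟩, i) with hpr
    have hprF : pr ∈ F := by
      simp only [hF, Finset.mem_filter, Finset.mem_univ, true_and]
      constructor
      · rw [Fin.lt_def]; simp [hpr]; omega
      · unfold cls
        rw [if_pos ⟨by simpa [hpr] using hi, heven⟩]
        simpa [hpr] using h2i0
    apply Finset.mem_biUnion.2 ⟨pr, hprF, ?_⟩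
    simp [hpr]
  -- at most one unmatched vertex
  have hDc : ∀ a : Fin n, a ∉ D → a.val < N n ∧ 2 * (a.val : ZMod (N n)) = k := by
    intro a ha
    have haN : a.val < N n := by
      by_contra hcon
      have hav : a.val < n := a.isLt
      have : n % 2 = 0 ∧ a.val = n - 1 := by
        unfold N at hcon; revert hcon; split <;> rename_i h <;> intro hcon
        · exact ⟨h, by omega⟩
        · omega
      exact ha (infty_matched this.1 a this.2)
    refine ⟨haN, ?_⟩
    by_contra h2
    exact ha (matched a haN h2)
  have huniq : ∀ a ∈ Dᶜ, ∀ b ∈ Dᶜ, a = b := by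
    intro a ha b hb
    rw [Finset.mem_compl] at ha hb
    obtain ⟨ha1, ha2⟩ := hDc a ha
    obtain ⟨hb1, hb2⟩ := hDc b hb
    exact Fin.ext (injZ hn ha1 hb1 (cancel2 hn (ha2.trans hb2.symm)))
  have hcompl : Dᶜ.card ≤ 1 := Finset.card_le_one.2 huniq
  have := Finset.card_compl D
  have hDle := Finset.card_le_univ D
  simp only [Fintype.card_fin] at this hDle
  omega

end MPaux


lemma pairs_card (n : ℕ) :
    2 * (Finset.univ.filter (fun p : Fin n × Fin n => p.1 < p.2)).card = n * n - n := by
  classical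
  have hswap : (Finset.univ.filter fun p : Fin n × Fin n => p.1 < p.2).card
      = (Finset.univ.filter fun p : Fin n × Fin n => p.2 < p.1).card := by
    apply Finset.card_bij' (fun p _ => (p.2, p.1)) (fun p _ => (p.2, p.1)) <;>
      intros a ha <;> simp_all
  have hunion : (Finset.univ.filter fun p : Fin n × Fin n => p.1 < p.2)
      ∪ (Finset.univ.filter fun p : Fin n × Fin n => p.2 < p.1)
      = (Finset.univ : Finset (Fin n)).offDiag := by
    ext p
    simp only [Finset.mem_union, Finset.mem_filter, Finset.mem_univ, true_and,
      Finset.mem_offDiag]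
    constructor
    · rintro (h | h)
      · exact h.ne
      · exact h.ne'
    · exact fun h => lt_or_gt_of_ne h
  have hdisj : Disjoint (Finset.univ.filter fun p : Fin n × Fin n => p.1 < p.2)
      (Finset.univ.filter fun p : Fin n × Fin n => p.2 < p.1) := by
    rw [Finset.disjoint_left]
    intro p hp hp'
    simp only [Finset.mem_filter] at hp hp'
    exact absurd hp'.2 (not_lt.2 hp.2.le)
  have hoff : ((Finset.univ : Finset (Fin n)).offDiag).card = n * n - n := by
    rw [Finset.offDiag_card]
    simp [Finset.card_univ]
  have := Finset.card_union_of_disjoint hdisj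
  rw [hunion, hoff, ← hswap] at this
  omega

open MeasureTheory ProbabilityTheory


lemma exp_neg_le_quad {x : ℝ} (hx : 0 ≤ x) :
    Real.exp (-x) ≤ 1 - x + x ^ 2 / 2 := by
  have hmono : Monotone (fun y : ℝ => 1 - y + y ^ 2 / 2 - Real.exp (-y)) := by
    apply monotone_of_deriv_nonneg
    · fun_prop
    · intro y
      have hd : HasDerivAt (fun y : ℝ => 1 - y + y ^ 2 / 2 - Real.exp (-y))
          (-1 + y + Real.exp (-y)) y := by
        have h1 : HasDerivAt (fun y : ℝ => 1 - y + y ^ 2 / 2) (-1 + y) y := by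
          have := ((hasDerivAt_id y).const_sub 1).add
            (((hasDerivAt_id y).pow 2).div_const 2)
          exact this.congr_deriv (by simp)
        have h2 : HasDerivAt (fun y : ℝ => Real.exp (-y)) (-Real.exp (-y)) y := by
          exact ((Real.hasDerivAt_exp (-y)).comp y ((hasDerivAt_id y).neg)).congr_deriv (by simp)
        exact (h1.sub h2).congr_deriv (by ring)
      rw [hd.deriv]
      have := Real.add_one_le_exp (-y)
      linarith
  have h0 : (fun y : ℝ => 1 - y + y ^ 2 / 2 - Real.exp (-y)) 0 ≤ _ := hmono hx
  simp only [neg_zero, Real.exp_zero] at h0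
  norm_num at h0
  linarith

section Prob
variable {Ω : Type*} [MeasurableSpace Ω] {P : Measure Ω} [IsProbabilityMeasure P]
  {n : ℕ} {X : Fin n → Ω → ℝ}

lemma integrable_of_bdd {g : Ω → ℝ} (hg : Measurable g) {C : ℝ}
    (h : ∀ ω, |g ω| ≤ C) : Integrable g P :=
  (integrable_const C).mono' hg.aestronglyMeasurable (ae_of_all _ fun ω => by simpa using h ω)

lemma sq_diff_mem (hbdd : ∀ i, ∀ ω, X i ω ∈ Set.Icc (0:ℝ) 1) (i j : Fin n) (ω : Ω) :
    (X i ω - X j ω) ^ 2 ∈ Set.Icc (0:ℝ) 1 := by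
  obtain ⟨h1, h2⟩ := hbdd i ω
  obtain ⟨h3, h4⟩ := hbdd j ω
  constructor
  · positivity
  · nlinarith

lemma EZ_eq (i0 : Fin n) (hmeas : ∀ i, Measurable (X i))
    (hindep : iIndepFun X P)
    (hident : ∀ i, IdentDistrib (X i) (X i0) P P)
    (hbdd : ∀ i, ∀ ω, X i ω ∈ Set.Icc (0:ℝ) 1)
    {i j : Fin n} (hij : i ≠ j) :
    ∫ ω, (X i ω - X j ω) ^ 2 ∂P = 2 * variance (X i0) P := by
  have hint : ∀ l : Fin n, Integrable (X l) P := fun l =>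
    integrable_of_bdd (hmeas l) (C := 1) (fun ω => by
      have := hbdd l ω; rw [abs_le]; constructor <;> [linarith [this.1]; exact this.2])
  have hintsq : ∀ l : Fin n, Integrable (fun ω => X l ω ^ 2) P := fun l =>
    integrable_of_bdd (by fun_prop) (C := 1) (fun ω => by
      have := hbdd l ω; rw [abs_le]; constructor <;> nlinarith [this.1, this.2])
  have hintmul : Integrable (fun ω => X i ω * X j ω) P :=
    integrable_of_bdd (by fun_prop) (C := 1) (fun ω => by
      have h1 := hbdd i ω; have h2 := hbdd j ω
      rw [abs_le]; constructor <;> nlinarith [h1.1, h1.2, h2.1, h2.2])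
  have hsq : ∀ l : Fin n, ∫ ω, X l ω ^ 2 ∂P = ∫ ω, X i0 ω ^ 2 ∂P := fun l => by
    have : IdentDistrib (fun ω => X l ω ^ 2) (fun ω => X i0 ω ^ 2) P P :=
      (hident l).comp (measurable_id.pow_const 2)
    exact this.integral_eq
  have hE : ∀ l : Fin n, ∫ ω, X l ω ∂P = ∫ ω, X i0 ω ∂P := fun l =>
    (hident l).integral_eq
  have hmul : ∫ ω, X i ω * X j ω ∂P = (∫ ω, X i ω ∂P) * ∫ ω, X j ω ∂P :=
    (hindep.indepFun hij).integral_mul_eq_mul_integral (hint i).aestronglyMeasurable (hint j).aestronglyMeasurable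
  have hvar : variance (X i0) P = (∫ ω, X i0 ω ^ 2 ∂P) - (∫ ω, X i0 ω ∂P) ^ 2 := by
    have hmem : MemLp (X i0) 2 P :=
      MemLp.of_bound (hmeas i0).aestronglyMeasurable 1 (ae_of_all _ fun ω => by
        have := hbdd i0 ω; rw [Real.norm_eq_abs, abs_le]
        constructor <;> [linarith [this.1]; exact this.2])
    rw [variance_eq_sub hmem]
    rfl
  have hexp : (fun ω => (X i ω - X j ω) ^ 2)
      = fun ω => X i ω ^ 2 - 2 * (X i ω * X j ω) + X j ω ^ 2 := by
    funext ω; ring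
  have I3 : Integrable (fun ω => 2 * (X i ω * X j ω)) P := hintmul.const_mul 2
  have I1 : Integrable (fun ω => X i ω ^ 2 - 2 * (X i ω * X j ω)) P :=
    (hintsq i).sub I3
  rw [hexp, integral_add I1 (hintsq j), integral_sub (hintsq i) I3,
    integral_const_mul, hmul, hsq i, hsq j, hE i, hE j, hvar]
  ring

lemma pair_mgf (i0 : Fin n) (hmeas : ∀ i, Measurable (X i))
    (hindep : iIndepFun X P)
    (hident : ∀ i, IdentDistrib (X i) (X i0) P P)
    (hbdd : ∀ i, ∀ ω, X i ω ∈ Set.Icc (0:ℝ) 1)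
    {i j : Fin n} (hij : i ≠ j) {s : ℝ} (hs : 0 ≤ s) :
    ∫ ω, Real.exp (-(s * (X i ω - X j ω) ^ 2)) ∂P
      ≤ Real.exp (s ^ 2 * variance (X i0) P - 2 * s * variance (X i0) P) := by
  set σ2 := variance (X i0) P with hσ2
  have hσ2nn : 0 ≤ σ2 := variance_nonneg _ _
  set Z : Ω → ℝ := fun ω => (X i ω - X j ω) ^ 2 with hZ
  have hZ01 : ∀ ω, Z ω ∈ Set.Icc (0:ℝ) 1 := sq_diff_mem hbdd i j
  have hZmeas : Measurable Z := by fun_prop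
  have hintZ : Integrable Z P := integrable_of_bdd hZmeas (C := 1)
    (fun ω => abs_le.2 ⟨by linarith [(hZ01 ω).1], (hZ01 ω).2⟩)
  have hintZ2 : Integrable (fun ω => Z ω ^ 2) P := integrable_of_bdd (by fun_prop) (C := 1)
    (fun ω => abs_le.2 ⟨by nlinarith [(hZ01 ω).1], by nlinarith [(hZ01 ω).1, (hZ01 ω).2]⟩)
  have hintexp : Integrable (fun ω => Real.exp (-(s * Z ω))) P :=
    integrable_of_bdd (by fun_prop) (C := 1) (fun ω => by
      rw [abs_of_pos (Real.exp_pos _), Real.exp_le_one_iff]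
      have h0 := (hZ01 ω).1
      nlinarith [mul_nonneg hs h0])
  have step1 : ∫ ω, Real.exp (-(s * Z ω)) ∂P
      ≤ ∫ ω, (1 - s * Z ω + (s * Z ω) ^ 2 / 2) ∂P := by
    apply integral_mono hintexp
    · apply Integrable.add
      · exact (integrable_const 1).sub (hintZ.const_mul s)
      · have : (fun ω => (s * Z ω) ^ 2 / 2) = fun ω => (s ^ 2 / 2) * Z ω ^ 2 := by
          funext ω; ring
        rw [this]; exact hintZ2.const_mul _
    · intro ω
      exact exp_neg_le_quad (by have := (hZ01 ω).1; positivity)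
  have hEZ : ∫ ω, Z ω ∂P = 2 * σ2 := EZ_eq i0 hmeas hindep hident hbdd hij
  have hEZ2 : ∫ ω, Z ω ^ 2 ∂P ≤ 2 * σ2 := by
    rw [← hEZ]
    apply integral_mono hintZ2 hintZ
    intro ω
    show Z ω ^ 2 ≤ Z ω
    have h01 := hZ01 ω
    nlinarith [mul_nonneg h01.1 (sub_nonneg.2 h01.2)]
  have hEZ2nn : 0 ≤ ∫ ω, Z ω ^ 2 ∂P := integral_nonneg (fun ω => sq_nonneg _)
  have step2 : ∫ ω, (1 - s * Z ω + (s * Z ω) ^ 2 / 2) ∂P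
      = 1 - s * (2 * σ2) + s ^ 2 * (∫ ω, Z ω ^ 2 ∂P) / 2 := by
    have h1 : (fun ω => 1 - s * Z ω + (s * Z ω) ^ 2 / 2)
        = fun ω => (1 : ℝ) - s * Z ω + (s ^ 2 / 2) * Z ω ^ 2 := by funext ω; ring
    have I0 : Integrable (fun _ : Ω => (1:ℝ)) P := integrable_const 1
    have I3 : Integrable (fun ω => s * Z ω) P := hintZ.const_mul s
    have I2 : Integrable (fun ω => s ^ 2 / 2 * Z ω ^ 2) P := hintZ2.const_mul _
    have I1 : Integrable (fun ω => 1 - s * Z ω) P := I0.sub I3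
    rw [h1, integral_add I1 I2, integral_sub I0 I3,
      integral_const_mul, integral_const_mul, integral_const, hEZ]
    simp only [measure_univ, ENNReal.toReal_one, smul_eq_mul, mul_one, probReal_univ]
    ring
  have step3 : 1 - s * (2 * σ2) + s ^ 2 * (∫ ω, Z ω ^ 2 ∂P) / 2
      ≤ 1 + (s ^ 2 * σ2 - 2 * s * σ2) := by
    have : s ^ 2 * (∫ ω, Z ω ^ 2 ∂P) ≤ s ^ 2 * (2 * σ2) :=
      mul_le_mul_of_nonneg_left hEZ2 (sq_nonneg s)
    linarith
  calc ∫ ω, Real.exp (-(s * Z ω)) ∂P ≤ 1 + (s ^ 2 * σ2 - 2 * s * σ2) :=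
        le_trans step1 (step2 ▸ step3)
    _ ≤ Real.exp (s ^ 2 * σ2 - 2 * s * σ2) := by
        have := Real.add_one_le_exp (s ^ 2 * σ2 - 2 * s * σ2); linarith


lemma matching_prod (hmeas : ∀ i, Measurable (X i))
    (hindep : iIndepFun X P)
    (hbdd : ∀ i, ∀ ω, X i ω ∈ Set.Icc (0:ℝ) 1) (c : ℝ)
    (s : Finset (Fin n × Fin n))
    (hdis : ∀ p ∈ s, ∀ q ∈ s, p ≠ q → p.1 ≠ q.1 ∧ p.1 ≠ q.2 ∧ p.2 ≠ q.1 ∧ p.2 ≠ q.2) :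
    ∫ ω, ∏ p ∈ s, Real.exp (-(c * (X p.1 ω - X p.2 ω) ^ 2)) ∂P
      = ∏ p ∈ s, ∫ ω, Real.exp (-(c * (X p.1 ω - X p.2 ω) ^ 2)) ∂P := by
  classical
  set F : Fin n × Fin n → Ω → ℝ :=
    fun p ω => Real.exp (-(c * (X p.1 ω - X p.2 ω) ^ 2)) with hF
  have hFmeas : ∀ p, Measurable (F p) := fun p => by
    apply Real.measurable_exp.comp
    exact ((((hmeas p.1).sub (hmeas p.2)).pow_const 2).const_mul c).neg
  have hFbd : ∀ p ω, |F p ω| ≤ Real.exp |c| := by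
    intro p ω
    rw [hF, abs_of_pos (Real.exp_pos _), Real.exp_le_exp]
    have hz := sq_diff_mem hbdd p.1 p.2 ω
    calc -(c * (X p.1 ω - X p.2 ω) ^ 2) ≤ |c * (X p.1 ω - X p.2 ω) ^ 2| := neg_le_abs _
      _ = |c| * |(X p.1 ω - X p.2 ω) ^ 2| := abs_mul _ _
      _ ≤ |c| * 1 := by
          apply mul_le_mul_of_nonneg_left _ (abs_nonneg c)
          rw [abs_of_nonneg hz.1]; exact hz.2
      _ = |c| := mul_one _
  have hFint : ∀ (t : Finset (Fin n × Fin n)),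
      Integrable (fun ω => ∏ p ∈ t, F p ω) P := by
    intro t
    apply integrable_of_bdd (Finset.measurable_prod t (fun p _ => hFmeas p))
      (C := Real.exp |c| ^ t.card)
    intro ω
    rw [Finset.abs_prod]
    calc ∏ p ∈ t, |F p ω| ≤ ∏ p ∈ t, Real.exp |c| :=
          Finset.prod_le_prod (fun p _ => abs_nonneg _) (fun p _ => hFbd p ω)
      _ = Real.exp |c| ^ t.card := Finset.prod_const _
  revert hdis
  induction s using Finset.induction_on with
  | empty => intro _; simp
  | @insert q s' hq ih =>
    intro hdis
    have ih' := ih (fun p hp r hr => hdis p (Finset.mem_insert_of_mem hp)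
      r (Finset.mem_insert_of_mem hr))
    simp only [Finset.prod_insert hq]
    set T := s'.biUnion (fun p => ({p.1, p.2} : Finset (Fin n))) with hT
    have hST : Disjoint ({q.1, q.2} : Finset (Fin n)) T := by
      rw [Finset.disjoint_left]
      intro a ha hat
      simp only [Finset.mem_insert, Finset.mem_singleton] at ha
      obtain ⟨p, hp, hap⟩ := Finset.mem_biUnion.1 hat
      simp only [Finset.mem_insert, Finset.mem_singleton] at hap
      have hne : q ≠ p := fun h => hq (h ▸ hp)
      obtain ⟨h1, h2, h3, h4⟩ := hdis q (Finset.mem_insert_self _ _)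
        p (Finset.mem_insert_of_mem hp) hne
      rcases ha with rfl | rfl <;> rcases hap with h | h
      · exact h1 h
      · exact h2 h
      · exact h3 h
      · exact h4 h
    have base := hindep.indepFun_finset ({q.1, q.2} : Finset (Fin n)) T hST hmeas
    have mem1 : ∀ p : {x // x ∈ s'}, (p : Fin n × Fin n).1 ∈ T := fun p =>
      Finset.mem_biUnion.2 ⟨p.1, p.2, by simp⟩
    have mem2 : ∀ p : {x // x ∈ s'}, (p : Fin n × Fin n).2 ∈ T := fun p =>
      Finset.mem_biUnion.2 ⟨p.1, p.2, by simp⟩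
    set g1 : (({q.1, q.2} : Finset (Fin n)) → ℝ) → ℝ := fun v =>
      Real.exp (-(c * (v ⟨q.1, by simp⟩ - v ⟨q.2, by simp⟩) ^ 2)) with hg1
    set g2 : (T → ℝ) → ℝ := fun v =>
      ∏ p ∈ s'.attach,
        Real.exp (-(c * (v ⟨(p : Fin n × Fin n).1, mem1 p⟩
          - v ⟨(p : Fin n × Fin n).2, mem2 p⟩) ^ 2)) with hg2
    have hg1m : Measurable g1 := by
      apply Real.measurable_exp.comp
      apply Measurable.neg
      apply Measurable.const_mul
      exact ((measurable_pi_apply (⟨q.1, by simp⟩ : ({q.1, q.2} : Finset (Fin n)))).sub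
        (measurable_pi_apply (⟨q.2, by simp⟩ : ({q.1, q.2} : Finset (Fin n))))).pow_const 2
    have hg2m : Measurable g2 := by
      apply Finset.measurable_prod
      intro p _
      apply Real.measurable_exp.comp
      apply Measurable.neg
      apply Measurable.const_mul
      exact ((measurable_pi_apply (⟨(p : Fin n × Fin n).1, mem1 p⟩ : T)).sub
        (measurable_pi_apply (⟨(p : Fin n × Fin n).2, mem2 p⟩ : T))).pow_const 2
    have key := base.comp hg1m hg2m
    have key2 : IndepFun (F q) (fun ω => ∏ p ∈ s', F p ω) P := by
      have heq2 : (fun ω => ∏ p ∈ s', F p ω) = (g2 ∘ fun ω (i : T) => X i ω) := by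
        funext ω
        simp only [Function.comp_apply, hg2]
        exact (Finset.prod_attach s' (fun p => F p ω)).symm
      have heq1 : F q = (g1 ∘ fun ω (i : ({q.1, q.2} : Finset (Fin n))) => X i ω) := rfl
      rw [heq1, heq2]
      exact key
    calc ∫ ω, F q ω * ∏ p ∈ s', F p ω ∂P
        = (∫ ω, F q ω ∂P) * ∫ ω, ∏ p ∈ s', F p ω ∂P :=
          key2.integral_mul_eq_mul_integral
            (by simpa using (hFint {q}).aestronglyMeasurable) (hFint s').aestronglyMeasurable
      _ = (∫ ω, F q ω ∂P) * ∏ p ∈ s', ∫ ω, F p ω ∂P := by rw [ih']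

set_option maxHeartbeats 1000000 in
lemma mgf_bound (hn : 2 ≤ n) (i0 : Fin n) (hmeas : ∀ i, Measurable (X i))
    (hindep : iIndepFun X P)
    (hident : ∀ i, IdentDistrib (X i) (X i0) P P)
    (hbdd : ∀ i, ∀ ω, X i ω ∈ Set.Icc (0:ℝ) 1)
    {l : ℝ} (hl : 0 ≤ l) :
    ∫ ω, Real.exp (-(l * ((1 / ((n : ℝ) * ((n : ℝ) - 1))) *
        ∑ p ∈ Finset.univ.filter (fun p : Fin n × Fin n => p.1 < p.2),
          (X p.1 ω - X p.2 ω) ^ 2))) ∂P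
      ≤ Real.exp (-(l * variance (X i0) P) +
          l ^ 2 * variance (X i0) P / (2 * ((n : ℝ) - 1))) := by
  classical
  haveI : NeZero (MPaux.N n) := ⟨by have := MPaux.N_pos hn; omega⟩
  have hn2R : (2:ℝ) ≤ (n:ℝ) := by exact_mod_cast hn
  have hn1R : (0:ℝ) < (n:ℝ) - 1 := by linarith
  have hnn1 : (0:ℝ) < (n:ℝ) * ((n:ℝ) - 1) := by nlinarith
  set σ2 := variance (X i0) P with hσ2
  have hσ2nn : 0 ≤ σ2 := variance_nonneg _ _
  set Pr := Finset.univ.filter (fun p : Fin n × Fin n => p.1 < p.2) with hPr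
  set Fk : ZMod (MPaux.N n) → Finset (Fin n × Fin n) :=
    fun k => Pr.filter (fun p => MPaux.cls n p = k) with hFk
  have hFkmem : ∀ k, ∀ p ∈ Fk k, p.1 < p.2 ∧ MPaux.cls n p = k := by
    intro k p hp
    simp only [hFk, hPr, Finset.mem_filter, Finset.mem_univ, true_and] at hp
    exact hp
  have hfibN : ∀ k, n - 1 ≤ 2 * (Fk k).card := fun k => MPaux.fiber_card hn k
  have hmkpos : ∀ k, (0:ℝ) < ((Fk k).card : ℝ) := fun k => by
    have := hfibN k
    have : 0 < (Fk k).card := by omega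
    exact_mod_cast this
  have hfibR : ∀ k, (n:ℝ) - 1 ≤ 2 * ((Fk k).card : ℝ) := fun k => by
    have h := hfibN k
    have h' : ((n - 1 : ℕ) : ℝ) ≤ ((2 * (Fk k).card : ℕ) : ℝ) := Nat.cast_le.2 h
    push_cast [Nat.cast_sub (by omega : 1 ≤ n)] at h'
    linarith
  have hcardsum : Pr.card = ∑ k : ZMod (MPaux.N n), (Fk k).card :=
    Finset.card_eq_sum_card_fiberwise (fun p _ => Finset.mem_univ (MPaux.cls n p))
  have hsummk : ∑ k : ZMod (MPaux.N n), ((Fk k).card : ℝ) = (n:ℝ) * ((n:ℝ) - 1) / 2 := by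
    have h2 : 2 * Pr.card = n * n - n := pairs_card n
    have h2' : (2:ℝ) * (Pr.card : ℝ) = (n:ℝ) * (n:ℝ) - (n:ℝ) := by
      have hle : n ≤ n * n := Nat.le_mul_of_pos_left n (by omega)
      have hcc : ((2 * Pr.card : ℕ) : ℝ) = ((n * n - n : ℕ) : ℝ) := by exact_mod_cast congrArg (fun m : ℕ => (m : ℝ)) h2
      rw [Nat.cast_sub hle] at hcc
      push_cast at hcc
      linarith
    have h3 : ((∑ k : ZMod (MPaux.N n), (Fk k).card : ℕ) : ℝ) = (Pr.card : ℝ) :=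
      Nat.cast_inj.2 hcardsum.symm
    push_cast at h3
    rw [h3]; linarith
  set S : ZMod (MPaux.N n) → Ω → ℝ :=
    fun k ω => ∑ p ∈ Fk k, (X p.1 ω - X p.2 ω) ^ 2 with hS
  have hSnn : ∀ k ω, 0 ≤ S k ω := fun k ω =>
    Finset.sum_nonneg (fun p _ => sq_nonneg _)
  have hSmeas : ∀ k, Measurable (S k) := fun k =>
    Finset.measurable_sum _ (fun p _ => ((hmeas p.1).sub (hmeas p.2)).pow_const 2)
  set c : ZMod (MPaux.N n) → ℝ := fun k => l / (2 * ((Fk k).card : ℝ)) with hc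
  have hc0 : ∀ k, 0 ≤ c k := fun k => div_nonneg hl (by have := hmkpos k; linarith)
  set w : ZMod (MPaux.N n) → ℝ :=
    fun k => 2 * ((Fk k).card : ℝ) / ((n:ℝ) * ((n:ℝ) - 1)) with hw
  have hw0 : ∀ k, 0 ≤ w k := fun k =>
    div_nonneg (by have := hmkpos k; linarith) hnn1.le
  have hw1 : ∑ k, w k = 1 := by
    rw [hw]
    rw [← Finset.sum_div]
    rw [← Finset.mul_sum, hsummk]
    field_simp
  have hexpk : ∀ k, Integrable (fun ω => Real.exp (-(c k * S k ω))) P := fun k =>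
    integrable_of_bdd (Real.measurable_exp.comp (((hSmeas k).const_mul _).neg)) (C := 1)
      (fun ω => by
        rw [abs_of_pos (Real.exp_pos _), Real.exp_le_one_iff]
        have := mul_nonneg (hc0 k) (hSnn k ω)
        linarith)
  have hGmeas : Measurable (fun ω => Real.exp (-(l * ((1 / ((n : ℝ) * ((n : ℝ) - 1))) *
      ∑ p ∈ Pr, (X p.1 ω - X p.2 ω) ^ 2)))) := by
    apply Real.measurable_exp.comp
    apply Measurable.neg
    apply Measurable.const_mul
    apply Measurable.const_mul
    exact Finset.measurable_sum _ (fun p _ => ((hmeas p.1).sub (hmeas p.2)).pow_const 2)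
  have hGint : Integrable (fun ω => Real.exp (-(l * ((1 / ((n : ℝ) * ((n : ℝ) - 1))) *
      ∑ p ∈ Pr, (X p.1 ω - X p.2 ω) ^ 2)))) P :=
    integrable_of_bdd hGmeas (C := 1) (fun ω => by
      rw [abs_of_pos (Real.exp_pos _), Real.exp_le_one_iff]
      have hs : 0 ≤ ∑ p ∈ Pr, (X p.1 ω - X p.2 ω) ^ 2 :=
        Finset.sum_nonneg (fun p _ => sq_nonneg _)
      have : 0 ≤ l * ((1 / ((n : ℝ) * ((n : ℝ) - 1))) * ∑ p ∈ Pr, (X p.1 ω - X p.2 ω) ^ 2) := by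
        apply mul_nonneg hl
        apply mul_nonneg _ hs
        positivity
      linarith)
  have hfiber_sum : ∀ ω, ∑ p ∈ Pr, (X p.1 ω - X p.2 ω) ^ 2 = ∑ k, S k ω := fun ω =>
    (Finset.sum_fiberwise Pr (MPaux.cls n) (fun p => (X p.1 ω - X p.2 ω) ^ 2)).symm
  have hconv : ∀ ω, Real.exp (-(l * ((1 / ((n : ℝ) * ((n : ℝ) - 1))) *
      ∑ p ∈ Pr, (X p.1 ω - X p.2 ω) ^ 2)))
      ≤ ∑ k, w k * Real.exp (-(c k * S k ω)) := by
    intro ω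
    have hterm : ∀ k, w k • (-(c k * S k ω))
        = -(l / ((n:ℝ) * ((n:ℝ) - 1)) * S k ω) := by
      intro k
      have hm := (hmkpos k).ne'
      simp only [smul_eq_mul, hw, hc]
      field_simp
    have harg : -(l * ((1 / ((n : ℝ) * ((n : ℝ) - 1))) *
        ∑ p ∈ Pr, (X p.1 ω - X p.2 ω) ^ 2))
        = ∑ k, w k • (-(c k * S k ω)) := by
      simp only [hterm]
      rw [Finset.sum_neg_distrib, ← Finset.mul_sum, ← hfiber_sum ω]
      ring
    rw [harg]
    exact convexOn_exp.map_sum_le (fun k _ => hw0 k) hw1 (fun k _ => Set.mem_univ _)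
  have hfiberbd : ∀ k, ∫ ω, Real.exp (-(c k * S k ω)) ∂P
      ≤ Real.exp (-(l * σ2) + l ^ 2 * σ2 / (2 * ((n:ℝ) - 1))) := by
    intro k
    have hdis : ∀ p ∈ Fk k, ∀ q ∈ Fk k, p ≠ q →
        p.1 ≠ q.1 ∧ p.1 ≠ q.2 ∧ p.2 ≠ q.1 ∧ p.2 ≠ q.2 := by
      intro p hp q hq hne
      exact MPaux.fiber_matching hn (hFkmem k p hp).1 (hFkmem k q hq).1
        (((hFkmem k p hp).2).trans ((hFkmem k q hq).2).symm) hne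
    have heq1 : (fun ω => Real.exp (-(c k * S k ω)))
        = fun ω => ∏ p ∈ Fk k, Real.exp (-(c k * (X p.1 ω - X p.2 ω) ^ 2)) := by
      funext ω
      rw [show -(c k * S k ω) = ∑ p ∈ Fk k, -(c k * (X p.1 ω - X p.2 ω) ^ 2) by
        rw [Finset.sum_neg_distrib, ← Finset.mul_sum], Real.exp_sum]
    rw [heq1, matching_prod hmeas hindep hbdd (c k) (Fk k) hdis]
    have hstep : ∏ p ∈ Fk k, (∫ ω, Real.exp (-(c k * (X p.1 ω - X p.2 ω) ^ 2)) ∂P)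
        ≤ ∏ p ∈ Fk k, Real.exp ((c k) ^ 2 * σ2 - 2 * (c k) * σ2) := by
      apply Finset.prod_le_prod
      · intro p _
        exact integral_nonneg (fun ω => (Real.exp_pos _).le)
      · intro p hp
        exact pair_mgf i0 hmeas hindep hident hbdd (ne_of_lt (hFkmem k p hp).1) (hc0 k)
    refine hstep.trans ?_
    rw [Finset.prod_const, ← Real.exp_nat_mul]
    apply Real.exp_le_exp.2
    have hm := hmkpos k
    have hfk := hfibR k
    have heqq : ((Fk k).card : ℝ) * ((c k) ^ 2 * σ2 - 2 * (c k) * σ2)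
        = l ^ 2 * σ2 / (4 * ((Fk k).card : ℝ)) - l * σ2 := by
      simp only [hc]
      field_simp
      ring
    rw [heqq]
    have hdd : l ^ 2 * σ2 / (4 * ((Fk k).card : ℝ)) ≤ l ^ 2 * σ2 / (2 * ((n:ℝ) - 1)) := by
      rw [div_le_div_iff₀ (by linarith) (by linarith)]
      apply mul_le_mul_of_nonneg_left (by linarith) (by positivity)
    linarith
  calc ∫ ω, Real.exp (-(l * ((1 / ((n : ℝ) * ((n : ℝ) - 1))) *
        ∑ p ∈ Pr, (X p.1 ω - X p.2 ω) ^ 2))) ∂P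
      ≤ ∫ ω, ∑ k, w k * Real.exp (-(c k * S k ω)) ∂P := by
        apply integral_mono hGint _ hconv
        exact integrable_finset_sum _ (fun k _ => (hexpk k).const_mul _)
    _ = ∑ k, w k * ∫ ω, Real.exp (-(c k * S k ω)) ∂P := by
        rw [integral_finset_sum _ (fun k _ => (hexpk k).const_mul _)]
        exact Finset.sum_congr rfl (fun k _ => integral_const_mul _ _)
    _ ≤ ∑ k, w k * Real.exp (-(l * σ2) + l ^ 2 * σ2 / (2 * ((n:ℝ) - 1))) :=
        Finset.sum_le_sum (fun k _ =>
          mul_le_mul_of_nonneg_left (hfiberbd k) (hw0 k))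
    _ = Real.exp (-(l * σ2) + l ^ 2 * σ2 / (2 * ((n:ℝ) - 1))) := by
        rw [← Finset.sum_mul, hw1, one_mul]

end Prob


open MeasureTheory ProbabilityTheory in
set_option maxHeartbeats 1000000 in
/-- Maurer–Pontil style concentration: for i.i.d. `[0,1]`-valued variables,
with probability at least `1 − δ`, `√σ² ≤ √V̂ + √(2 ln(1/δ)/(n−1))`, where `V̂`
is the unbiased sample variance (as a U-statistic). -/
theorem sample_std_concentration {Ω : Type*} [MeasurableSpace Ω] (P : Measure Ω)
    [IsProbabilityMeasure P] (n : ℕ) (hn : 2 ≤ n) (X : Fin n → Ω → ℝ)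
    (hmeas : ∀ i, Measurable (X i))
    (hindep : iIndepFun X P)
    (hident : ∀ i, IdentDistrib (X i) (X ⟨0, by omega⟩) P P)
    (hbdd : ∀ i, ∀ ω, X i ω ∈ Set.Icc (0:ℝ) 1)
    (δ : ℝ) (hδ : δ ∈ Set.Ioo (0:ℝ) 1) :
    1 - δ ≤
      (P {ω | Real.sqrt (variance (X ⟨0, by omega⟩) P) ≤
          Real.sqrt ((1 / ((n : ℝ) * ((n : ℝ) - 1))) *
              ∑ i : Fin n, ∑ j : Fin n, (if i < j then (X i ω - X j ω) ^ 2 else 0))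
            + Real.sqrt (2 * Real.log (1 / δ) / ((n : ℝ) - 1))}).toReal := by
  classical
  obtain ⟨hδ0, hδ1⟩ := hδ
  have i0 : Fin n := ⟨0, by omega⟩
  set σ2 := variance (X ⟨0, by omega⟩) P with hσ2def
  have hσ2nn : 0 ≤ σ2 := variance_nonneg _ _
  set σ := Real.sqrt σ2 with hσdef
  have hσnn : 0 ≤ σ := Real.sqrt_nonneg _
  have hσsq : σ ^ 2 = σ2 := Real.sq_sqrt hσ2nn
  have hn2R : (2:ℝ) ≤ (n:ℝ) := by exact_mod_cast hn
  have hn1R : (0:ℝ) < (n:ℝ) - 1 := by linarith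
  have hlog : 0 < Real.log (1 / δ) := Real.log_pos (by rw [lt_div_iff₀ hδ0]; linarith)
  set ε := Real.sqrt (2 * Real.log (1 / δ) / ((n : ℝ) - 1)) with hεdef
  have hεpos : 0 < ε := Real.sqrt_pos.2 (by positivity)
  have hε2 : ε ^ 2 = 2 * Real.log (1 / δ) / ((n : ℝ) - 1) :=
    Real.sq_sqrt (by positivity)
  set G : Ω → ℝ := fun ω => (1 / ((n : ℝ) * ((n : ℝ) - 1))) *
      ∑ i : Fin n, ∑ j : Fin n, (if i < j then (X i ω - X j ω) ^ 2 else 0) with hGdef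
  set E : Set Ω := {ω | σ ≤ Real.sqrt (G ω) + ε} with hEdef
  -- the key rewriting of the double sum as a sum over pairs
  have hGrw : ∀ ω, G ω = (1 / ((n : ℝ) * ((n : ℝ) - 1))) *
      ∑ p ∈ Finset.univ.filter (fun p : Fin n × Fin n => p.1 < p.2),
        (X p.1 ω - X p.2 ω) ^ 2 := by
    intro ω
    rw [hGdef]
    congr 1
    rw [Finset.sum_filter, ← Finset.univ_product_univ, Finset.sum_product]
  have hGnn : ∀ ω, 0 ≤ G ω := fun ω => by
    rw [hGrw ω]
    apply mul_nonneg (by positivity)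
    exact Finset.sum_nonneg (fun p _ => sq_nonneg _)
  have hGmeas : Measurable G := by
    apply Measurable.const_mul
    apply Finset.measurable_sum
    intro i _
    apply Finset.measurable_sum
    intro j _
    exact Measurable.ite (by simp) (((hmeas i).sub (hmeas j)).pow_const 2) measurable_const
  rcases le_or_gt σ ε with hcase | hcase
  · -- trivial case : σ ≤ ε
    have hE : E = Set.univ := by
      rw [Set.eq_univ_iff_forall]
      intro ω
      have := Real.sqrt_nonneg (G ω)
      show σ ≤ Real.sqrt (G ω) + ε
      linarith
    have hPE : P E = 1 := by rw [hE, measure_univ]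
    show 1 - δ ≤ (P E).toReal
    rw [hPE]
    simp
    linarith
  · -- main case : ε < σ
    have hσpos : 0 < σ := hεpos.trans hcase
    have hσ2pos : 0 < σ2 := by rw [← hσsq]; positivity
    set cc := (σ - ε) ^ 2 with hccdef
    have hσε : 0 ≤ σ - ε := by linarith
    have hccnn : 0 ≤ cc := sq_nonneg _
    have hccσ2 : cc < σ2 := by
      rw [← hσsq, hccdef]
      have : σ - ε < σ := by linarith
      exact pow_lt_pow_left₀ this hσε (by norm_num)
    set D := σ2 - cc with hDdef
    have hDpos : 0 < D := by rw [hDdef]; linarith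
    set l := D * ((n : ℝ) - 1) / σ2 with hldef
    have hlpos : 0 < l := by positivity
    -- Markov / Chernoff
    set f : Ω → ℝ := fun ω => Real.exp (l * (cc - G ω)) with hfdef
    have hfmeas : Measurable f := by
      apply Real.measurable_exp.comp
      exact ((measurable_const.sub hGmeas).const_mul l)
    have hfint : Integrable f P := integrable_of_bdd hfmeas (C := Real.exp (l * cc))
      (fun ω => by
        rw [abs_of_pos (Real.exp_pos _), Real.exp_le_exp]
        have h1 := hGnn ω
        have h2 : l * (cc - G ω) ≤ l * cc := by
          apply mul_le_mul_of_nonneg_left _ hlpos.le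
          linarith
        linarith)
    have hsub1 : {ω | G ω < cc} ⊆ {ω | 1 ≤ f ω} := by
      intro ω hω
      simp only [Set.mem_setOf_eq] at hω ⊢
      rw [hfdef]
      apply Real.one_le_exp
      have : 0 ≤ cc - G ω := by linarith
      positivity
    have hmarkov : (P {ω | G ω < cc}).toReal ≤ ∫ ω, f ω ∂P := by
      have h1 : (P {ω | G ω < cc}).toReal ≤ (P {ω | 1 ≤ f ω}).toReal :=
        ENNReal.toReal_mono (measure_ne_top _ _) (measure_mono hsub1)
      have h2 := mul_meas_ge_le_integral_of_nonneg
        (ae_of_all P (fun ω => (Real.exp_pos (l * (cc - G ω))).le)) hfint 1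
      rw [one_mul] at h2
      exact h1.trans h2
    -- compute the integral bound
    have hfsplit : ∀ ω, f ω = Real.exp (l * cc) * Real.exp (-(l * G ω)) := by
      intro ω
      rw [← Real.exp_add]
      show Real.exp (l * (cc - G ω)) = Real.exp (l * cc + -(l * G ω))
      congr 1
      ring
    have hintf : ∫ ω, f ω ∂P = Real.exp (l * cc) * ∫ ω, Real.exp (-(l * G ω)) ∂P := by
      simp_rw [hfsplit]
      exact integral_const_mul _ _
    have hmgf : ∫ ω, Real.exp (-(l * G ω)) ∂P
        ≤ Real.exp (-(l * σ2) + l ^ 2 * σ2 / (2 * ((n : ℝ) - 1))) := by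
      have := mgf_bound hn (⟨0, by omega⟩ : Fin n) hmeas hindep hident hbdd hlpos.le
      simp_rw [← hGrw] at this
      exact this
    have hnumeric : Real.exp (l * cc) *
        Real.exp (-(l * σ2) + l ^ 2 * σ2 / (2 * ((n : ℝ) - 1))) ≤ δ := by
      rw [← Real.exp_add]
      have e1 : l * cc + (-(l * σ2) + l ^ 2 * σ2 / (2 * ((n : ℝ) - 1)))
          = -(((n:ℝ) - 1) * D ^ 2 / (2 * σ2)) := by
        rw [hldef, hDdef]
        field_simp
        ring
      have e2 : ε * σ ≤ D := by
        rw [hDdef, hccdef, ← hσsq]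
        nlinarith [hεpos.le, hσε]
      have e3 : ε ^ 2 * σ2 ≤ D ^ 2 := by
        rw [← hσsq]
        nlinarith [hεpos.le, hσnn, hDpos.le]
      have e4 : ((n:ℝ) - 1) * ε ^ 2 / 2 = Real.log (1 / δ) := by
        rw [hε2]
        field_simp
      have e5 : ((n:ℝ) - 1) * ε ^ 2 / 2 ≤ ((n:ℝ) - 1) * D ^ 2 / (2 * σ2) := by
        rw [div_le_div_iff₀ (by norm_num) (by positivity)]
        nlinarith [e3, hn1R]
      have e6 : Real.exp (-(((n:ℝ) - 1) * D ^ 2 / (2 * σ2))) ≤ δ := by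
        have h7 : -(((n:ℝ) - 1) * D ^ 2 / (2 * σ2)) ≤ Real.log δ := by
          have hlogeq : Real.log (1 / δ) = -Real.log δ := by
            rw [one_div, Real.log_inv]
          have he4' : ((n:ℝ) - 1) * ε ^ 2 / 2 = -Real.log δ := by
            rw [e4, hlogeq]
          linarith [e5]
        calc Real.exp (-(((n:ℝ) - 1) * D ^ 2 / (2 * σ2))) ≤ Real.exp (Real.log δ) :=
              Real.exp_le_exp.2 h7
          _ = δ := Real.exp_log hδ0
      rw [e1]
      exact e6
    have hPA : (P {ω | G ω < cc}).toReal ≤ δ := by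
      calc (P {ω | G ω < cc}).toReal ≤ ∫ ω, f ω ∂P := hmarkov
        _ = Real.exp (l * cc) * ∫ ω, Real.exp (-(l * G ω)) ∂P := hintf
        _ ≤ Real.exp (l * cc) *
            Real.exp (-(l * σ2) + l ^ 2 * σ2 / (2 * ((n : ℝ) - 1))) :=
              mul_le_mul_of_nonneg_left hmgf (Real.exp_pos _).le
        _ ≤ δ := hnumeric
    -- event inclusion
    have hsub2 : {ω | G ω < cc}ᶜ ⊆ E := by
      intro ω hω
      simp only [Set.mem_compl_iff, Set.mem_setOf_eq, not_lt] at hω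
      show σ ≤ Real.sqrt (G ω) + ε
      have h1 : Real.sqrt cc ≤ Real.sqrt (G ω) := Real.sqrt_le_sqrt hω
      have h2 : Real.sqrt cc = σ - ε := by
        rw [hccdef, Real.sqrt_sq hσε]
      linarith
    have hAmeas : MeasurableSet {ω | G ω < cc} :=
      measurableSet_lt hGmeas measurable_const
    have hcompl : (P {ω | G ω < cc}ᶜ).toReal = 1 - (P {ω | G ω < cc}).toReal := by
      rw [prob_compl_eq_one_sub hAmeas]
      rw [ENNReal.toReal_sub_of_le prob_le_one ENNReal.one_ne_top]
      simp
    have hfinal : (P {ω | G ω < cc}ᶜ).toReal ≤ (P E).toReal :=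
      ENNReal.toReal_mono (measure_ne_top _ _) (measure_mono hsub2)
    show 1 - δ ≤ (P E).toReal
    rw [hcompl] at hfinal
    linarith
end
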